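/- Let q = ℓ^2 with ℓ ≥ 7 (so q ≥ 49). Then there exists δ ∈ (0, 1 - 1/q) such that the Tsfasman–Vladut–Zink bound exceeds the Gilbert–Varshamov bound at δ, i.e., 1 - δ - 1/(ℓ - 1) > 1 - δ·log_q(q-1) + δ·log_q(δ) + (1-δ)·log_q(1-δ). -/

import Mathlib

/-!
At `δ = 1/2` the Gilbert–Varshamov bound is `1 - H_q(1/2) / log q` with `H_q(1/2) = log (q - 1) / 2 + log 2`
(entropy in nats), so with `q = ℓ²` the claim becomes `2 log ℓ < (ℓ - 1) (log 2 - (log ℓ² - log (ℓ² - 1)) / 2)`.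
The bracket exceeds `log 2 - 1/96 > 2/3`, while `log ℓ < (ℓ - 1) / 3` for `ℓ ≥ 7` by concavity of `log`
and `log 7 < 2`.
-/

open Real

lemma sub_mul_logb_add_mul_logb_eq_one_sub_qaryEntropy_div_log (q : ℕ) (δ : ℝ) :
    1 - δ * logb q (q - 1) + δ * logb q δ + (1 - δ) * logb q (1 - δ) =
      1 - qaryEntropy q δ / log q := by
  simp only [logb, qaryEntropy, binEntropy, log_inv, Int.cast_sub, Int.cast_natCast, Int.cast_one]
  ring

lemma qaryEntropy_two_inv (q : ℕ) : qaryEntropy q 2⁻¹ = log (q - 1) / 2 + log 2 := by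
  rw [qaryEntropy, binEntropy_two_inv]
  push_cast
  ring

lemma log_seven_lt_two : log 7 < 2 := by
  rw [log_lt_iff_lt_exp (by norm_num), show (2 : ℝ) = 1 + 1 by norm_num, exp_add]
  nlinarith [exp_one_gt_d9]

lemma log_lt_sub_one_div_three {x : ℝ} (hx : 7 ≤ x) : log x < (x - 1) / 3 := by
  have hsplit : log x = log 7 + log (x / 7) := by
    rw [← log_mul (by norm_num) (by positivity)]
    ring_nf
  have hconcave : log (x / 7) ≤ x / 7 - 1 := log_le_sub_one_of_pos (by positivity)
  linarith [log_seven_lt_two]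

lemma log_sub_log_sub_one_le {y : ℝ} (hy : 1 < y) : log y - log (y - 1) ≤ (y - 1)⁻¹ := by
  have hy1 : 0 < y - 1 := sub_pos.2 hy
  have h := one_sub_inv_le_log_of_pos (x := (y - 1) / y) (by positivity)
  rw [log_div hy1.ne' (by linarith), inv_div] at h
  have : 1 - y / (y - 1) = -(y - 1)⁻¹ := by field_simp; ring
  linarith

lemma two_div_three_lt_log_two_sub_half_log_sq_sub_log {x : ℝ} (hx : 7 ≤ x) :
    2 / 3 < log 2 - (log (x ^ 2) - log (x ^ 2 - 1)) / 2 := by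
  have hx2 : 49 ≤ x ^ 2 := by nlinarith
  have hgap : log (x ^ 2) - log (x ^ 2 - 1) ≤ 48⁻¹ :=
    (log_sub_log_sub_one_le (by linarith)).trans (inv_anti₀ (by norm_num) (by linarith))
  linarith [log_two_gt_d9]

lemma tvz_gt_gv_at_two_inv {x : ℝ} (hx : 7 ≤ x) :
    1 - (log (x ^ 2 - 1) / 2 + log 2) / log (x ^ 2) < 1 - 2⁻¹ - 1 / (x - 1) := by
  have hlog : 0 < log x := log_pos (by linarith)
  have hlog_sq : log (x ^ 2) = 2 * log x := by rw [log_pow]; push_cast; ring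
  have hkey : 2 * log x < (log 2 - (log (x ^ 2) - log (x ^ 2 - 1)) / 2) * (x - 1) := by
    nlinarith [log_lt_sub_one_div_three hx, two_div_three_lt_log_two_sub_half_log_sq_sub_log hx]
  have hrhs : (log (x ^ 2 - 1) / 2 + log 2) / log (x ^ 2) - 2⁻¹ =
      (log 2 - (log (x ^ 2) - log (x ^ 2 - 1)) / 2) / (2 * log x) := by
    rw [hlog_sq]; field_simp; ring
  have hfrac : 1 / (x - 1) < (log 2 - (log (x ^ 2) - log (x ^ 2 - 1)) / 2) / (2 * log x) := by
    rw [div_lt_div_iff₀ (by linarith) (by positivity)]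
    linarith
  linarith

/-- For q = ℓ² with ℓ ≥ 7, the Tsfasman–Vladut–Zink bound exceeds the
Gilbert–Varshamov bound at some δ ∈ (0, 1 - 1/q). -/
theorem tvz_beats_gv (ℓ q : ℕ) (hℓ : 7 ≤ ℓ) (hq : q = ℓ ^ 2) :
    ∃ δ : ℝ, 0 < δ ∧ δ < 1 - 1 / q ∧
      1 - δ - 1 / ((ℓ : ℝ) - 1) >
        1 - δ * Real.logb q (q - 1) + δ * Real.logb q δ +
          (1 - δ) * Real.logb q (1 - δ) := by
  have hℓ' : (7 : ℝ) ≤ ℓ := by exact_mod_cast hℓ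
  have hq' : (q : ℝ) = (ℓ : ℝ) ^ 2 := by rw [hq]; push_cast; rfl
  refine ⟨2⁻¹, by norm_num, ?_, ?_⟩
  · have : 1 / (q : ℝ) ≤ 1 / 49 := one_div_le_one_div_of_le (by norm_num) (by nlinarith)
    linarith
  · rw [gt_iff_lt, sub_mul_logb_add_mul_logb_eq_one_sub_qaryEntropy_div_log, qaryEntropy_two_inv, hq']
    exact tvz_gt_gv_at_two_inv hℓ'
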